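/- Let k ≥ 2 and N ≥ k be integers, and suppose B : ℕ → ℕ satisfies B(0) = 0, B(i) = i for 1 ≤ i ≤ N, B(n) = ∑_{i=1}^k B(n − B(n−i)) for all n > N, and B is slow (B(n+1) − B(n) ∈ {0, 1} for all n ≥ 1). Then k = 3, N ∈ {5, 6}, and B equals the B-sequence at every positive index (i.e., B is the slow sequence satisfying B(n) = B(n − B(n−1)) + B(n − B(n−2)) + B(n − B(n−3)) with B(i) = i for 1 ≤ i ≤ 5). -/

import Mathlib

/-!
Since `B` is the identity on `[0, N]` and `k ≤ N`, `B (N + 1) = 1 + ⋯ + k =: T`; slowness forces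
`T ∈ {N, N + 1}`, so `B` is the identity on `[0, T]` and satisfies the recurrence beyond `T`.
Every summand `B (n - B (n - i))` of the recurrence can then be evaluated by induction, as long as
it falls back into `[0, T + 2]`.

For `k = 2` this gives `B 10 = 6` and `B 11 = 8`. For `k ≥ 4` write `T = K + k` and
`M = (k + 1) K + k`: then `B (T + 1 + m) = T + m - ⌊m / (k + 1)⌋` for `m < M`,
`B (T + 1 + m) = T + m - K - 1` for `M ≤ m ≤ M + k - 2`, `T + m - K - 2` at `m = M + k - 1` and
`T + m - K - 1` again at `m = M + k`, a jump by `2`. For `k = 3` we have `T = 6`, and both `B` and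
the `B`-sequence solve the same recurrence with the same values on `[0, 6]`; since a slow `B` is
positive, each step of the recurrence only looks back, so they agree.
-/

/-- The auxiliary sequence: `a 1 = 3`, `a i = 3 * a (i-1) - 1` for `i ≥ 2`. -/
def a : ℕ → ℕ
  | 0 => 0
  | 1 => 3
  | n + 2 => 3 * a (n + 1) - 1

/-- `R(m, i) = max(0, ⌊(m − a i − 1)/3^i⌋)` (truncated ℕ-subtraction gives the max). -/
def Rmi (m i : ℕ) : ℕ := (m - a i - 1) / 3 ^ i

/-- `R(m) = ∑_{i=1}^∞ R(m, i)`; all terms with `i > m` vanish, so a finite sum suffices. -/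
def R (m : ℕ) : ℕ := ∑ i ∈ Finset.Icc 1 m, Rmi m i

/-- `m` has a witness pair `(k, i)` of positive integers with `m = k·3^i + a i`. -/
def HasWitness (m : ℕ) : Prop := ∃ k i : ℕ, 1 ≤ k ∧ 1 ≤ i ∧ m = k * 3 ^ i + a i

/-- `B` is the `B`-sequence: `B 0 = 0`, `B n = n` for `1 ≤ n ≤ 5`, and
`B n = B (n - B (n-1)) + B (n - B (n-2)) + B (n - B (n-3))` for `n ≥ 6`. -/
def IsBSeq (B : ℕ → ℕ) : Prop :=
  B 0 = 0 ∧ (∀ n, 1 ≤ n → n ≤ 5 → B n = n) ∧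
    ∀ n, 6 ≤ n → B n = B (n - B (n - 1)) + B (n - B (n - 2)) + B (n - B (n - 3))

open Finset

theorem sum_Icc_ite_le {k s : ℕ} (hs : s ≤ k) :
    ∑ i ∈ Icc 1 k, (if i ≤ s then 1 else 0) = s := by
  rw [sum_boole, Nat.cast_id, show {i ∈ Icc 1 k | i ≤ s} = Icc 1 s by ext; simp; omega]
  simp

structure IsBkSolution (k T : ℕ) (B : ℕ → ℕ) : Prop where
  eq_self : ∀ n, n ≤ T → B n = n
  eq_sum : ∀ n, T < n → B n = ∑ i ∈ Icc 1 k, B (n - B (n - i))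

namespace IsBkSolution

variable {k T K : ℕ} {B C : ℕ → ℕ}

theorem apply_sub_apply_sub (hB : IsBkSolution k T B) {n i m : ℕ} (hm : n - i = m)
    (hle : n - B m ≤ T) : B (n - B (n - i)) = n - B m := by
  rw [hm]; exact hB.eq_self _ hle

theorem apply_succ (hB : IsBkSolution k T B) (hkT : k ≤ T) :
    B (T + 1) = ∑ i ∈ Icc 1 k, i := by
  rw [hB.eq_sum _ (by omega)]
  refine sum_congr rfl fun i hi => ?_
  rw [mem_Icc] at hi
  rw [hB.apply_sub_apply_sub rfl (by rw [hB.eq_self _ (by omega)]; omega), hB.eq_self _ (by omega)]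
  omega

theorem succ (hB : IsBkSolution k T B) (h : B (T + 1) = T + 1) : IsBkSolution k (T + 1) B where
  eq_self n hn := by
    obtain hn | rfl := Nat.lt_or_eq_of_le hn
    exacts [hB.eq_self n (by omega), h]
  eq_sum n hn := hB.eq_sum n (by omega)

theorem eq_of_pos (hB : IsBkSolution k T B) (hC : IsBkSolution k T C) (hkT : k ≤ T)
    (hpos : ∀ n, 1 ≤ n → 1 ≤ B n) : B = C := by
  funext n
  induction n using Nat.strong_induction_on with
  | _ n ih =>
  rcases le_or_gt n T with hn | hn
  · rw [hB.eq_self n hn, hC.eq_self n hn]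
  rw [hB.eq_sum n hn, hC.eq_sum n hn]
  refine sum_congr rfl fun i hi => ?_
  rw [mem_Icc] at hi
  have := hpos (n - i) (by omega)
  rw [← ih (n - i) (by omega), ih _ (by omega)]

theorem linear_phase (hB : IsBkSolution k (K + k) B) (hT : ∑ i ∈ Icc 1 k, i = K + k)
    (q s : ℕ) (hq : q ≤ K) (hs : s ≤ k) (hqs : q + s < K + k) :
    B (K + k + 1 + ((k + 1) * q + s)) = K + k + k * q + s := by
  suffices ∀ m q s, m = (k + 1) * q + s → q ≤ K → s ≤ k → q + s < K + k →
      B (K + k + 1 + m) = K + k + k * q + s from this _ q s rfl hq hs hqs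
  intro m
  induction m using Nat.strong_induction_on with
  | _ m ih =>
  intro q s hm hq hs hqs
  have hkq : (k + 1) * q = k * q + q := by ring
  have hterm : ∀ i ∈ Icc 1 k,
      B (K + k + 1 + m - B (K + k + 1 + m - i)) = q + i + if i ≤ s then 1 else 0 := by
    intro i hi
    rw [mem_Icc] at hi
    by_cases his : i ≤ s
    · have := ih ((k + 1) * q + (s - i)) (by omega) q (s - i) rfl hq (by omega) (by omega)
      rw [hB.apply_sub_apply_sub (m := K + k + 1 + ((k + 1) * q + (s - i))) (by omega) (by omega)]
      simp only [his, if_true]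
      omega
    · rcases q with _ | p
      · rw [hB.apply_sub_apply_sub rfl (by rw [hB.eq_self _ (by omega)]; omega),
          hB.eq_self _ (by omega)]
        simp only [his, if_false]
        omega
      · have hkp : (k + 1) * p = k * p + p := by ring
        have hkp1 : k * (p + 1) = k * p + k := by ring
        have := ih ((k + 1) * p + (k + 1 + s - i)) (by omega) p (k + 1 + s - i) rfl (by omega)
          (by omega) (by omega)
        rw [hB.apply_sub_apply_sub (m := K + k + 1 + ((k + 1) * p + (k + 1 + s - i))) (by omega)
          (by omega)]
        simp only [his, if_false]
        omega
  rw [hB.eq_sum _ (by omega), sum_congr rfl hterm, sum_add_distrib, sum_add_distrib, sum_const,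
    Nat.card_Icc, Nat.add_sub_cancel, smul_eq_mul, hT, sum_Icc_ite_le hs]
  omega

theorem apply_past_linear_phase (hB : IsBkSolution k (K + k) B) (hT : ∑ i ∈ Icc 1 k, i = K + k)
    (hk : 1 ≤ k) (d : ℕ) (hd : d ≤ k - 2) :
    B (K + k + 1 + ((k + 1) * K + k + d)) + 1 = K + k + k * K + k + d := by
  induction d using Nat.strong_induction_on with
  | _ d ih =>
  have hkK : (k + 1) * K = k * K + K := by ring
  have hterm : ∀ i ∈ Icc 1 k, B (K + k + 1 + ((k + 1) * K + k + d) -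
      B (K + k + 1 + ((k + 1) * K + k + d) - i)) =
        K + i + (if i ≤ d then 1 else 0) + (if i ≤ k - 1 then 1 else 0) := by
    intro i hi
    rw [mem_Icc] at hi
    by_cases hid : i ≤ d
    · have := ih (d - i) (by omega) (by omega)
      rw [hB.apply_sub_apply_sub (m := K + k + 1 + ((k + 1) * K + k + (d - i))) (by omega)
        (by omega)]
      simp only [hid, show i ≤ k - 1 by omega, if_true]
      omega
    by_cases hik : i < k
    · have := hB.linear_phase hT K (k + d - i) le_rfl (by omega) (by omega)
      rw [hB.apply_sub_apply_sub (m := K + k + 1 + ((k + 1) * K + (k + d - i))) (by omega)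
        (by omega)]
      simp only [hid, show i ≤ k - 1 by omega, if_true, if_false]
      omega
    · have := hB.linear_phase hT K d le_rfl (by omega) (by omega)
      rw [show K + k + 1 + ((k + 1) * K + k + d) - i = K + k + 1 + ((k + 1) * K + d) by omega,
        this, show K + k + 1 + ((k + 1) * K + k + d) - (K + k + k * K + d) = K + k + 1 by omega,
        hB.apply_succ (by omega), hT]
      simp only [hid, show ¬ i ≤ k - 1 by omega, if_false]
      omega
  rw [hB.eq_sum _ (by omega), sum_congr rfl hterm, sum_add_distrib, sum_add_distrib,
    sum_add_distrib, sum_const, Nat.card_Icc, Nat.add_sub_cancel, smul_eq_mul, hT,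
    sum_Icc_ite_le (show d ≤ k by omega), sum_Icc_ite_le (show k - 1 ≤ k by omega)]
  omega

theorem apply_before_jump (hB : IsBkSolution k (K + k) B) (hT : ∑ i ∈ Icc 1 k, i = K + k)
    (hk : 2 ≤ k) : B (K + k + 1 + ((k + 1) * K + 2 * k - 1)) + 2 = K + k + k * K + 2 * k - 1 := by
  have hkK : (k + 1) * K = k * K + K := by ring
  have hterm : ∀ i ∈ Icc 1 k, B (K + k + 1 + ((k + 1) * K + 2 * k - 1) -
      B (K + k + 1 + ((k + 1) * K + 2 * k - 1) - i)) =
        K + i + (if i ≤ k - 1 then 1 else 0) + (if i ≤ k - 2 then 1 else 0) := by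
    intro i hi
    rw [mem_Icc] at hi
    by_cases hik : i ≤ k - 2
    · have := hB.apply_past_linear_phase hT (by omega) (k - 1 - i) (by omega)
      rw [hB.apply_sub_apply_sub (m := K + k + 1 + ((k + 1) * K + k + (k - 1 - i))) (by omega)
        (by omega)]
      simp only [hik, show i ≤ k - 1 by omega, if_true]
      omega
    by_cases hik' : i = k - 1
    · have := hB.apply_past_linear_phase hT (by omega) 0 (by omega)
      rw [show K + k + 1 + ((k + 1) * K + 2 * k - 1) - i = K + k + 1 + ((k + 1) * K + k + 0) by
          omega,
        show K + k + 1 + ((k + 1) * K + 2 * k - 1) - B (K + k + 1 + ((k + 1) * K + k + 0)) =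
          K + k + 1 by omega,
        hB.apply_succ (by omega), hT]
      simp only [hik, show i ≤ k - 1 by omega, if_true, if_false]
      omega
    · have := hB.linear_phase hT K (k - 1) le_rfl (by omega) (by omega)
      rw [show K + k + 1 + ((k + 1) * K + 2 * k - 1) - i = K + k + 1 + ((k + 1) * K + (k - 1)) by
          omega, this,
        show K + k + 1 + ((k + 1) * K + 2 * k - 1) - (K + k + k * K + (k - 1)) = K + k + 1 by
          omega,
        hB.apply_succ (by omega), hT]
      simp only [hik, show ¬ i ≤ k - 1 by omega, if_false]
      omega
  rw [hB.eq_sum _ (by omega), sum_congr rfl hterm, sum_add_distrib, sum_add_distrib,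
    sum_add_distrib, sum_const, Nat.card_Icc, Nat.add_sub_cancel, smul_eq_mul, hT,
    sum_Icc_ite_le (show k - 1 ≤ k by omega), sum_Icc_ite_le (show k - 2 ≤ k by omega)]
  omega

theorem apply_jump (hB : IsBkSolution k (K + k) B) (hT : ∑ i ∈ Icc 1 k, i = K + k)
    (hk : 4 ≤ k) : B (K + k + 1 + ((k + 1) * K + 2 * k)) = K + k + k * K + 2 * k - 1 := by
  have hkK : (k + 1) * K = k * K + K := by ring
  have hterm : ∀ i ∈ Icc 1 k, B (K + k + 1 + ((k + 1) * K + 2 * k) -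
      B (K + k + 1 + ((k + 1) * K + 2 * k) - i)) =
        K + i + 1 + (if i ≤ 1 then 1 else 0) + (if i ≤ k - 2 then 1 else 0) := by
    intro i hi
    rw [mem_Icc] at hi
    by_cases hi1 : i = 1
    · have := hB.apply_before_jump hT (by omega)
      rw [hB.apply_sub_apply_sub (m := K + k + 1 + ((k + 1) * K + 2 * k - 1)) (by omega)
        (by omega)]
      simp only [hi1, show 1 ≤ k - 2 by omega, le_refl, if_true]
      omega
    by_cases hik : i ≤ k - 2
    · have := hB.apply_past_linear_phase hT (by omega) (k - i) (by omega)
      rw [hB.apply_sub_apply_sub (m := K + k + 1 + ((k + 1) * K + k + (k - i))) (by omega)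
        (by omega)]
      simp only [hik, show ¬ i ≤ 1 by omega, if_true, if_false]
      omega
    by_cases hik' : i = k - 1
    · have := hB.apply_past_linear_phase hT (by omega) 1 (by omega)
      rw [show K + k + 1 + ((k + 1) * K + 2 * k) - i = K + k + 1 + ((k + 1) * K + k + 1) by omega,
        show K + k + 1 + ((k + 1) * K + 2 * k) - B (K + k + 1 + ((k + 1) * K + k + 1)) =
          K + k + 1 by omega,
        hB.apply_succ (by omega), hT]
      simp only [hik, show ¬ i ≤ 1 by omega, if_false]
      omega
    · have := hB.apply_past_linear_phase hT (by omega) 0 (by omega)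
      have h2 : B (K + k + 1 + 1) = K + k + 1 := by
        simpa using hB.linear_phase hT 0 1 K.zero_le (by omega) (by omega)
      rw [show K + k + 1 + ((k + 1) * K + 2 * k) - i = K + k + 1 + ((k + 1) * K + k + 0) by omega,
        show K + k + 1 + ((k + 1) * K + 2 * k) - B (K + k + 1 + ((k + 1) * K + k + 0)) =
          K + k + 1 + 1 by omega, h2]
      simp only [hik, show ¬ i ≤ 1 by omega, if_false]
      omega
  rw [hB.eq_sum _ (by omega), sum_congr rfl hterm, sum_add_distrib, sum_add_distrib,
    sum_add_distrib, sum_add_distrib, sum_const, sum_const, Nat.card_Icc, Nat.add_sub_cancel,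
    smul_eq_mul, smul_eq_mul, hT, sum_Icc_ite_le (show 1 ≤ k by omega),
    sum_Icc_ite_le (show k - 2 ≤ k by omega)]
  omega

theorem exists_jump_of_four_le (hB : IsBkSolution k (∑ i ∈ Icc 1 k, i) B) (hk : 4 ≤ k) :
    ∃ n, 1 ≤ n ∧ B (n + 1) = B n + 2 := by
  obtain ⟨K, hK⟩ : ∃ K, ∑ i ∈ Icc 1 k, i = K + k :=
    Nat.exists_eq_add_of_le' (single_le_sum (f := id) (by simp) (by simp; omega))
  rw [hK] at hB
  refine ⟨K + k + 1 + ((k + 1) * K + 2 * k - 1), by omega, ?_⟩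
  have := hB.apply_before_jump hK (by omega)
  rw [show K + k + 1 + ((k + 1) * K + 2 * k - 1) + 1 = K + k + 1 + ((k + 1) * K + 2 * k) by omega,
    hB.apply_jump hK hk]
  omega

theorem jump_of_two (hB : IsBkSolution 2 3 B) : B 11 = B 10 + 2 := by
  have hrec : ∀ n, 3 < n → B n = B (n - B (n - 1)) + B (n - B (n - 2)) := by
    intro n hn
    simp [hB.eq_sum n hn, sum_Icc_succ_top]
  have h1 := hB.eq_self 1 (by omega)
  have h2 := hB.eq_self 2 (by omega)
  have h3 := hB.eq_self 3 (by omega)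
  have h4 : B 4 = 3 := by rw [hrec 4 (by omega)]; simp [h1, h2, h3]
  have h5 : B 5 = 4 := by rw [hrec 5 (by omega)]; simp [h2, h3, h4]
  have h6 : B 6 = 5 := by rw [hrec 6 (by omega)]; simp [h2, h3, h4, h5]
  have h7 : B 7 = 5 := by rw [hrec 7 (by omega)]; simp [h2, h3, h5, h6]
  have h8 : B 8 = 6 := by rw [hrec 8 (by omega)]; simp [h3, h6, h7]
  have h9 : B 9 = 6 := by rw [hrec 9 (by omega)]; simp [h3, h4, h7, h8]
  have h10 : B 10 = 6 := by rw [hrec 10 (by omega)]; simp [h4, h8, h9]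
  rw [hrec 11 (by omega)]
  simp [h5, h9, h10]

theorem exists_jump (hB : IsBkSolution k (∑ i ∈ Icc 1 k, i) B) (hk : 2 ≤ k) (hk3 : k ≠ 3) :
    ∃ n, 1 ≤ n ∧ B (n + 1) = B n + 2 := by
  obtain rfl | hk4 : k = 2 ∨ 4 ≤ k := by omega
  · exact ⟨10, by omega, jump_of_two hB⟩
  · exact exists_jump_of_four_le hB hk4

end IsBkSolution

theorem IsBSeq.isBkSolution {C : ℕ → ℕ} (hC : IsBSeq C) : IsBkSolution 3 6 C := by
  obtain ⟨h0, hinit, hrec⟩ := hC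
  have hrec' : ∀ n, 6 ≤ n → C n = ∑ i ∈ Icc 1 3, C (n - C (n - i)) := by
    intro n hn
    simp [hrec n hn, sum_Icc_succ_top, add_assoc]
  refine ⟨fun n hn => ?_, fun n hn => hrec' n hn.le⟩
  obtain rfl | hn0 := n.eq_zero_or_pos
  · exact h0
  obtain hn5 | rfl := Nat.lt_or_eq_of_le hn
  · exact hinit n hn0 (by omega)
  · simp [hrec 6 le_rfl, hinit]

theorem le_and_le_add_one_of_sub_mem {x y : ℕ} (h : (y : ℤ) - x ∈ ({0, 1} : Set ℤ)) :
    x ≤ y ∧ y ≤ x + 1 := by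
  simp only [Set.mem_insert_iff, Set.mem_singleton_iff] at h
  omega

theorem one_le_of_slow {B : ℕ → ℕ} (h1 : B 1 = 1)
    (hslow : ∀ n : ℕ, 1 ≤ n → (B (n + 1) : ℤ) - B n ∈ ({0, 1} : Set ℤ)) :
    ∀ n, 1 ≤ n → 1 ≤ B n := by
  intro n hn
  induction n, hn using Nat.le_induction with
  | base => omega
  | succ n hn ih => have := le_and_le_add_one_of_sub_mem (hslow n hn); omega

/-- if `B` satisfies `B i = i` for `1 ≤ i ≤ N` (with `N ≥ k ≥ 2`), the
`B_k`-recurrence for all `n > N`, and is slow, then `k = 3`, `N ∈ {5, 6}`, and `B` agrees with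
the `B`-sequence at every positive index. -/
theorem stmt_17 (k N : ℕ) (hk : 2 ≤ k) (hN : k ≤ N) (B : ℕ → ℕ)
    (hB0 : B 0 = 0)
    (hinit : ∀ i, 1 ≤ i → i ≤ N → B i = i)
    (hrec : ∀ n, N < n → B n = ∑ i ∈ Finset.Icc 1 k, B (n - B (n - i)))
    (hslow : ∀ n : ℕ, 1 ≤ n → (B (n + 1) : ℤ) - B n ∈ ({0, 1} : Set ℤ)) :
    k = 3 ∧ (N = 5 ∨ N = 6) ∧ ∀ C : ℕ → ℕ, IsBSeq C → ∀ n, 1 ≤ n → B n = C n := by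
  have hBN : IsBkSolution k N B :=
    ⟨fun n hn => n.eq_zero_or_pos.elim (· ▸ hB0) (hinit n · hn), hrec⟩
  have hstep := le_and_le_add_one_of_sub_mem (hslow N (by omega))
  rw [hBN.apply_succ hN, hinit N (by omega) le_rfl] at hstep
  have hB : IsBkSolution k (∑ i ∈ Icc 1 k, i) B := by
    obtain h | h : ∑ i ∈ Icc 1 k, i = N ∨ ∑ i ∈ Icc 1 k, i = N + 1 := by omega
    · rwa [h]
    · rw [h]; exact hBN.succ (by rw [hBN.apply_succ hN, h])
  have hk3 : k = 3 := by
    by_contra hk3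
    obtain ⟨n, hn, hjump⟩ := hB.exists_jump hk hk3
    have := le_and_le_add_one_of_sub_mem (hslow n hn)
    omega
  subst hk3
  have h6 : ∑ i ∈ Icc 1 3, i = 6 := rfl
  rw [h6] at hB hstep
  have hpos := one_le_of_slow (hinit 1 le_rfl (by omega)) hslow
  exact ⟨rfl, by omega, fun C hC n _ =>
    congrFun (hB.eq_of_pos hC.isBkSolution (by norm_num) hpos) n⟩
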